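/- Let f : ℝ → ℝ be continuously differentiable with f(0) = 0 and f ≥ 0, and suppose f'(ξ) = K²(ξ) for a continuous function K. Then Φ(ξ,η) = J₀(√(η·f(ξ))) satisfies 4·∂²Φ/∂ξ∂η = −K²(ξ)·Φ(ξ,η) for η > 0 and f(ξ) > 0, together with the initial condition Φ(ξ,0) = 1 and Φ(0,η) = 1. -/

import Mathlib

open Real MeasureTheory Filter

/-- Bessel function of the first kind of integer order `n`, via its power series. -/
noncomputable def besselJ (n : ℕ) (x : ℝ) : ℝ :=
  ∑' m : ℕ, (-1 : ℝ) ^ m / ((Nat.factorial m) * (Nat.factorial (m + n))) * (x / 2) ^ (2 * m + n)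

/-- Modified Bessel (MacDonald) function of the second kind of order `ν`,
via its integral representation `K_ν(u) = ∫₀^∞ exp(-u cosh t) cosh(ν t) dt`. -/
noncomputable def besselK (ν : ℝ) (u : ℝ) : ℝ :=
  ∫ t in Set.Ioi (0 : ℝ), Real.exp (-u * Real.cosh t) * Real.cosh (ν * t)

/-!
For `t ≥ 0`, `J₀(√t) = G(t)` with the entire power series `G(t) = ∑ (-t)ᵐ / ((m!)² 4ᵐ)`,
whose coefficients satisfy `4 (m+1)² cₘ₊₁ = -cₘ`; this is Bessel's equation in the form
`4 (G' + t G'') = -G`. With `u = η f(ξ)` we get `∂_η Φ = f(ξ) G'(u)` and then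
`∂_ξ ∂_η Φ = f'(ξ) (G'(u) + u G''(u)) = -f'(ξ) G(u) / 4`.
-/

open scoped Nat

noncomputable section

def evalSeries (b : ℕ → ℝ) (t : ℝ) : ℝ := ∑' m, b m * t ^ m

def derivCoeff (b : ℕ → ℝ) (m : ℕ) : ℝ := (m + 1) * b (m + 1)

section FactorialBound

variable {b : ℕ → ℝ}

lemma summable_mul_pow_of_abs_le (hb : ∀ m, |b m| ≤ 1 / m !) (t : ℝ) :
    Summable fun m => b m * t ^ m := by
  refine .of_norm_bounded (Real.summable_pow_div_factorial |t|) fun m => ?_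
  rw [norm_mul, norm_pow, Real.norm_eq_abs, Real.norm_eq_abs, div_eq_mul_one_div, mul_comm]
  gcongr
  exact hb m

lemma abs_derivCoeff_le (hb : ∀ m, |b m| ≤ 1 / m !) (m : ℕ) :
    |derivCoeff b m| ≤ 1 / m ! := by
  have hm : (0 : ℝ) < m + 1 := by positivity
  calc |derivCoeff b m| = (m + 1) * |b (m + 1)| := by
        rw [derivCoeff, abs_mul, abs_of_pos hm]
    _ ≤ (m + 1) * (1 / (m + 1)!) := by gcongr; exact hb (m + 1)
    _ = 1 / m ! := by
        rw [Nat.factorial_succ]; push_cast; field_simp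

lemma natCast_mul_pow_pred_le {R : ℝ} (hR : 1 ≤ R) (n : ℕ) : n * R ^ (n - 1) ≤ (2 * R) ^ n := by
  rw [mul_pow]
  exact mul_le_mul (by exact_mod_cast Nat.lt_two_pow_self.le) (pow_le_pow_right₀ hR (n.sub_le 1))
    (by positivity) (by positivity)

lemma hasDerivAt_evalSeries (hb : ∀ m, |b m| ≤ 1 / m !) (t : ℝ) :
    HasDerivAt (evalSeries b) (evalSeries (derivCoeff b) t) t := by
  set R := |t| + 1
  have hR : 1 ≤ R := by simp [R]
  have ht : t ∈ Metric.ball (0 : ℝ) R := by simp [R]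
  have hbound : ∀ n, ∀ y ∈ Metric.ball (0 : ℝ) R,
      ‖b n * (n * y ^ (n - 1))‖ ≤ (2 * R) ^ n / n ! := by
    intro n y hy
    have hy : |y| ≤ R := (mem_ball_zero_iff.mp hy).le
    calc ‖b n * (n * y ^ (n - 1))‖ = |b n| * (n * |y| ^ (n - 1)) := by simp
      _ ≤ 1 / n ! * (n * R ^ (n - 1)) := by gcongr; exact hb n
      _ ≤ 1 / n ! * (2 * R) ^ n := by gcongr; exact natCast_mul_pow_pred_le hR n
      _ = (2 * R) ^ n / n ! := by ring
  have key := hasDerivAt_tsum_of_isPreconnected (Real.summable_pow_div_factorial (2 * R))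
    Metric.isOpen_ball (convex_ball (0 : ℝ) R).isPreconnected
    (fun n y _ => (hasDerivAt_pow n y).const_mul (b n)) hbound ht
    (summable_mul_pow_of_abs_le hb t) ht
  have hsum : Summable fun n => b n * (n * t ^ (n - 1)) :=
    .of_norm_bounded (Real.summable_pow_div_factorial (2 * R)) fun n => hbound n t ht
  refine key.congr_deriv ?_
  rw [hsum.tsum_eq_zero_add]
  simp only [evalSeries, derivCoeff, Nat.cast_zero, zero_mul, mul_zero, zero_add,
    Nat.add_sub_cancel, Nat.cast_succ]
  exact tsum_congr fun m => by ring

end FactorialBound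

def besselJZeroCoeff (m : ℕ) : ℝ := (-1) ^ m / ((m ! : ℝ) ^ 2 * 4 ^ m)

lemma abs_besselJZeroCoeff_le (m : ℕ) : |besselJZeroCoeff m| ≤ 1 / m ! := by
  rw [besselJZeroCoeff, abs_div, abs_pow, abs_neg, abs_one, one_pow,
    abs_of_pos (by positivity)]
  gcongr
  have h1 : (1 : ℝ) ≤ m ! := by exact_mod_cast m.factorial_pos
  have h2 : (1 : ℝ) ≤ 4 ^ m := one_le_pow₀ (by norm_num)
  nlinarith

lemma abs_derivCoeff_besselJZeroCoeff_le (m : ℕ) : |derivCoeff besselJZeroCoeff m| ≤ 1 / m ! :=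
  abs_derivCoeff_le abs_besselJZeroCoeff_le m

lemma besselJZeroCoeff_succ (m : ℕ) :
    besselJZeroCoeff (m + 1) = -besselJZeroCoeff m / (4 * ((m : ℝ) + 1) ^ 2) := by
  rw [besselJZeroCoeff, besselJZeroCoeff, Nat.factorial_succ, pow_succ, pow_succ]
  push_cast
  field_simp
  ring

lemma besselJ_zero_sqrt {s : ℝ} (hs : 0 ≤ s) : besselJ 0 √s = evalSeries besselJZeroCoeff s := by
  refine tsum_congr fun m => ?_
  rw [besselJZeroCoeff, add_zero, Nat.add_zero, pow_mul, div_pow, sq_sqrt hs, div_pow]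
  field_simp
  norm_num

lemma besselJ_zero_zero : besselJ 0 0 = 1 := by
  rw [← sqrt_zero, besselJ_zero_sqrt le_rfl, evalSeries,
    tsum_eq_single 0 fun m hm => by simp [zero_pow hm]]
  simp [besselJZeroCoeff]

/-- Bessel's equation `x J₀'' + J₀' + x J₀ = 0` in the variable `t = x²`. -/
lemma besselJZero_ode (t : ℝ) :
    4 * (evalSeries (derivCoeff besselJZeroCoeff) t
      + t * evalSeries (derivCoeff (derivCoeff besselJZeroCoeff)) t)
      = -evalSeries besselJZeroCoeff t := by
  set c := besselJZeroCoeff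
  have s0 := summable_mul_pow_of_abs_le abs_besselJZeroCoeff_le t
  have s1 := (summable_mul_pow_of_abs_le abs_derivCoeff_besselJZeroCoeff_le t).mul_left 4
  have hcoeff (m : ℕ) : c (m + 1) + 4 * derivCoeff c (m + 1)
      = -4 * derivCoeff (derivCoeff c) m := by
    simp only [derivCoeff, c, besselJZeroCoeff_succ (m + 1)]
    push_cast
    field_simp
    ring
  have hshift : evalSeries c t + 4 * evalSeries (derivCoeff c) t
      = -4 * t * evalSeries (derivCoeff (derivCoeff c)) t := by
    rw [evalSeries, evalSeries, ← tsum_mul_left, ← s0.tsum_add s1, (s0.add s1).tsum_eq_zero_add,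
      evalSeries, ← tsum_mul_left]
    have h0 : c 0 * t ^ 0 + 4 * (derivCoeff c 0 * t ^ 0) = 0 := by
      norm_num [c, derivCoeff, besselJZeroCoeff]
    rw [h0, zero_add]
    exact tsum_congr fun m => by linear_combination t ^ (m + 1) * hcoeff m
  linear_combination hshift

lemma hasDerivAt_besselJ_zero_sqrt_mul {η a : ℝ} (hη : 0 < η) (ha : 0 ≤ a) :
    HasDerivAt (fun η' => besselJ 0 √(η' * a))
      (a * evalSeries (derivCoeff besselJZeroCoeff) (η * a)) η := by
  have hG := (hasDerivAt_evalSeries abs_besselJZeroCoeff_le (η * a)).comp η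
    (hasDerivAt_mul_const a)
  rw [mul_comm a]
  refine hG.congr_of_eventuallyEq ?_
  filter_upwards [lt_mem_nhds hη] with η' hη'
  exact besselJ_zero_sqrt (mul_nonneg hη'.le ha)

end

theorem volkov_operator_identity_general (f K : ℝ → ℝ) (hf : ContDiff ℝ 1 f) (hf0 : f 0 = 0)
    (hfK : ∀ ξ, deriv f ξ = (K ξ) ^ 2) :
    (∀ ξ η : ℝ, 0 < η → 0 < f ξ →
        4 * deriv (fun ξ' => deriv (fun η' => besselJ 0 (Real.sqrt (η' * f ξ'))) η) ξ
          = -(K ξ) ^ 2 * besselJ 0 (Real.sqrt (η * f ξ))) ∧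
    (∀ ξ : ℝ, besselJ 0 (Real.sqrt ((0 : ℝ) * f ξ)) = 1) ∧
    (∀ η : ℝ, besselJ 0 (Real.sqrt (η * f 0)) = 1) := by
  refine ⟨fun ξ η hη hfξ => ?_, fun ξ => by simp [besselJ_zero_zero],
    fun η => by simp [hf0, besselJ_zero_zero]⟩
  set G' := evalSeries (derivCoeff besselJZeroCoeff)
  have hfd : HasDerivAt f (K ξ ^ 2) ξ := hfK ξ ▸ (hf.differentiable one_ne_zero ξ).hasDerivAt
  have hinner : (fun ξ' => deriv (fun η' => besselJ 0 √(η' * f ξ')) η)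
      =ᶠ[nhds ξ] fun ξ' => f ξ' * G' (η * f ξ') := by
    filter_upwards [hf.continuous.continuousAt.eventually (lt_mem_nhds hfξ)] with ξ' hfξ'
    exact (hasDerivAt_besselJ_zero_sqrt_mul hη hfξ'.le).deriv
  have hG' : HasDerivAt (fun ξ' => G' (η * f ξ'))
      (evalSeries (derivCoeff (derivCoeff besselJZeroCoeff)) (η * f ξ) * (η * K ξ ^ 2)) ξ := by
    exact (hasDerivAt_evalSeries abs_derivCoeff_besselJZeroCoeff_le (η * f ξ)).comp ξ
      (hfd.const_mul η)
  have houter : HasDerivAt (fun ξ' => f ξ' * G' (η * f ξ')) _ ξ := hfd.mul hG'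
  rw [hinner.deriv_eq, houter.deriv, besselJ_zero_sqrt (by positivity)]
  linear_combination K ξ ^ 2 * besselJZero_ode (η * f ξ)

theorem volkov_operator_identity (f K : ℝ → ℝ) (hf : ContDiff ℝ 1 f) (hf0 : f 0 = 0)
    (hfpos : ∀ ξ, 0 ≤ f ξ) (hK : Continuous K) (hfK : ∀ ξ, deriv f ξ = (K ξ) ^ 2) :
    (∀ ξ η : ℝ, 0 < η → 0 < f ξ →
        4 * deriv (fun ξ' => deriv (fun η' => besselJ 0 (Real.sqrt (η' * f ξ'))) η) ξ
          = -(K ξ) ^ 2 * besselJ 0 (Real.sqrt (η * f ξ))) ∧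
    (∀ ξ : ℝ, besselJ 0 (Real.sqrt ((0 : ℝ) * f ξ)) = 1) ∧
    (∀ η : ℝ, besselJ 0 (Real.sqrt (η * f 0)) = 1) :=
  volkov_operator_identity_general f K hf hf0 hfK
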